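/- Let N = 2n+1 be odd and D the N×N equispaced trigonometric differentiation matrix. Then D has eigenvalues exactly {i m : m ∈ ℤ, |m| ≤ n}; in particular 0 is an eigenvalue (with eigenvector the all-ones vector) and D is singular. -/

import Mathlib

open Real

/-- The equispaced trigonometric differentiation matrix, as a complex matrix. -/
noncomputable def Dmat (N : ℕ) : Matrix (Fin N) (Fin N) ℂ := fun j k =>
  if j = k then 0
  else (-1 : ℂ) ^ (j.1 + k.1) / (2 * (Real.sin (π * ((j.1 : ℝ) - (k.1 : ℝ)) / N) : ℂ))

/-!
`D` is circulant: with `ψ l = exp (2 π I l / N)` and `x = exp (π I (j - k) / N)` one has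
`(-1) ^ (j + k) = x ^ N` and `2 sin (π (j - k) / N) = I (x⁻¹ - x)`, so `D j k = c (j - k)` with
`c l = I ψ(l) ^ (n + 1) / (ψ l - 1)`. Hence every character `ψ ^ m` of `ℤ/N` is an eigenvector,
with eigenvalue `I ∑_{ζ ≠ 1} ζ ^ r / (ζ - 1)` over the `N`-th roots of unity, `r = n + 1 - m`.
Raising `r` by one adds `∑_{ζ ≠ 1} ζ ^ r = -1` (for `0 < r < N`), and pairing `ζ` with `ζ⁻¹` gives
`∑_{ζ ≠ 1} 1 / (ζ - 1) = -n`; so the eigenvalue is `I m`. These `N` distinct eigenvalues exhaust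
the roots of the characteristic polynomial.
-/

open Complex Matrix Finset

theorem Matrix.circulant_mulVec_addChar {G R : Type*} [AddCommGroup G] [Fintype G]
    [CommSemiring R] (c : G → R) (ψ : AddChar G R) :
    circulant c *ᵥ ⇑ψ = (∑ l, c l * ψ (-l)) • ⇑ψ := by
  ext j
  simp only [mulVec, dotProduct, circulant_apply, Pi.smul_apply, smul_eq_mul, sum_mul]
  refine Fintype.sum_equiv (Equiv.subLeft j) _ _ fun k => ?_
  rw [Equiv.subLeft_apply, mul_assoc, ← AddChar.map_add_eq_mul, neg_sub, sub_add_cancel]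

theorem Matrix.isRoot_charpoly_of_mulVec_eq_smul {ι K : Type*} [Fintype ι] [DecidableEq ι]
    [Field K] {A : Matrix ι ι K} {μ : K} {v : ι → K} (hv : v ≠ 0) (h : A *ᵥ v = μ • v) :
    A.charpoly.IsRoot μ := by
  rw [Polynomial.IsRoot, eval_charpoly, ← exists_mulVec_eq_zero_iff]
  refine ⟨v, hv, ?_⟩
  ext i
  simp [sub_mulVec, h]

theorem Matrix.mem_of_mulVec_eq_smul_of_card_le {ι K : Type*} [Fintype ι] [DecidableEq ι]
    [Field K] {A : Matrix ι ι K} {S : Finset K} (hS : Fintype.card ι ≤ #S)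
    (hSA : ∀ ν ∈ S, ∃ v ≠ 0, A *ᵥ v = ν • v) {μ : K} {v : ι → K} (hv : v ≠ 0)
    (h : A *ᵥ v = μ • v) : μ ∈ S := by
  classical
  have mem_roots {ν : K} {w : ι → K} (hw : w ≠ 0) (hνw : A *ᵥ w = ν • w) :
      ν ∈ A.charpoly.roots.toFinset :=
    Multiset.mem_toFinset.2 <| (Polynomial.mem_roots A.charpoly_monic.ne_zero).2 <|
      isRoot_charpoly_of_mulVec_eq_smul hw hνw
  have hsub : S ⊆ A.charpoly.roots.toFinset := fun ν hν => by
    obtain ⟨w, hw, hνw⟩ := hSA ν hν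
    exact mem_roots hw hνw
  have hcard : #A.charpoly.roots.toFinset ≤ #S := calc
    _ ≤ A.charpoly.roots.card := Multiset.toFinset_card_le _
    _ ≤ A.charpoly.natDegree := Polynomial.card_roots' _
    _ ≤ #S := by rwa [charpoly_natDegree_eq_dim]
  rw [Finset.eq_of_subset_of_card_le hsub hcard]
  exact mem_roots hv h

section
variable {N : ℕ} [NeZero N]

def Fin.powChar {M : Type*} [CommMonoid M] {ω : M} (hω : ω ^ N = 1) : AddChar (Fin N) M where
  toFun j := ω ^ (j : ℕ)
  map_zero_eq_one' := by simp
  map_add_eq_mul' a b := by rw [Fin.val_add, ← pow_eq_pow_mod _ hω, pow_add]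

theorem Fin.powChar_apply {M : Type*} [CommMonoid M] {ω : M} (hω : ω ^ N = 1) (j : Fin N) :
    Fin.powChar hω j = ω ^ (j : ℕ) := rfl

theorem IsPrimitiveRoot.injective_powChar {M : Type*} [CommMonoid M] {ω : M}
    (hω : IsPrimitiveRoot ω N) : Function.Injective (Fin.powChar hω.pow_eq_one) := fun j k h =>
  Fin.ext <| hω.pow_inj j.isLt k.isLt h

end

section
variable {K : Type*} [Field K]

theorem AddChar.two_mul_sum_inv_sub_one {G : Type*} [AddCommGroup G] [Fintype G]
    {ψ : AddChar G K} (hψ : Function.Injective ψ) :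
    2 * ∑ a, (ψ a - 1)⁻¹ = 1 - Fintype.card G := by
  classical
  have pair (a : G) : (ψ a - 1)⁻¹ + (ψ (-a) - 1)⁻¹ = if a = 0 then 0 else -1 := by
    split_ifs with ha
    · simp [ha]
    · have h1 : ψ a - 1 ≠ 0 := sub_ne_zero.2 fun h => ha (hψ (h.trans ψ.map_zero_eq_one.symm))
      have h0 : ψ a ≠ 0 := (ψ.val_isUnit a).ne_zero
      have h2 : (ψ a)⁻¹ - 1 = -(ψ a - 1) / ψ a := by field_simp; ring
      rw [AddChar.map_neg_eq_inv, h2]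
      field_simp
      ring
  calc 2 * ∑ a, (ψ a - 1)⁻¹ = ∑ a, ((ψ a - 1)⁻¹ + (ψ (-a) - 1)⁻¹) := by
        rw [sum_add_distrib, Fintype.sum_equiv (Equiv.neg G) (fun a => (ψ (-a) - 1)⁻¹)
          (fun a => (ψ a - 1)⁻¹) (fun _ => rfl)]
        ring
    _ = 1 - Fintype.card G := by
        simp_rw [pair]
        simp [Finset.sum_ite, Finset.filter_ne', Finset.card_erase_of_mem,
          Nat.cast_pred Fintype.card_pos]

theorem AddChar.sum_pow_succ_div_sub_one {G : Type*} [AddCommGroup G] [Fintype G]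
    {ψ : AddChar G K} (hψ : Function.Injective ψ) (r : ℕ) :
    ∑ a, ψ a ^ (r + 1) / (ψ a - 1) = ∑ a, ψ a ^ r / (ψ a - 1) + ∑ a, ψ a ^ r - 1 := by
  classical
  -- `ψ 0 = 1`, so the `a = 0` terms of the quotients are `x / 0 = 0`.
  have step (a : G) :
      ψ a ^ (r + 1) / (ψ a - 1) = ψ a ^ r / (ψ a - 1) + ψ a ^ r - if a = 0 then 1 else 0 := by
    split_ifs with ha
    · simp [ha]
    · have h1 : ψ a - 1 ≠ 0 := sub_ne_zero.2 fun h => ha (hψ (h.trans ψ.map_zero_eq_one.symm))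
      field_simp
      ring
  simp only [step, sum_sub_distrib, sum_add_distrib, sum_ite_eq', mem_univ, if_true]

namespace AddChar
variable {N : ℕ} [NeZero N] {ψ : AddChar (Fin N) K}

open Fin.NatCast in
theorem sum_pow_eq_zero_of_injective (hψ : Function.Injective ψ) {r : ℕ} (hr0 : r ≠ 0)
    (hrN : r < N) : ∑ a, ψ a ^ r = 0 := by
  refine sum_eq_zero_of_ne_one (ψ := ψ ^ r) (ne_one_iff.2 ⟨1, ?_⟩)
  rw [pow_apply, ← map_nsmul_eq_pow, ← ψ.map_zero_eq_one, hψ.ne_iff, nsmul_one, Ne,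
    Fin.natCast_eq_zero]
  exact Nat.not_dvd_of_pos_of_lt (Nat.pos_of_ne_zero hr0) hrN

theorem sum_pow_div_sub_one_of_injective (hψ : Function.Injective ψ) {r : ℕ} (hr1 : 1 ≤ r)
    (hrN : r ≤ N) : ∑ a, ψ a ^ r / (ψ a - 1) = ∑ a, (ψ a - 1)⁻¹ + N - r := by
  induction r, hr1 using Nat.le_induction with
  | base =>
    rw [← zero_add 1, sum_pow_succ_div_sub_one hψ]
    simp
  | succ r hr ih =>
    rw [sum_pow_succ_div_sub_one hψ, ih (by omega),
      sum_pow_eq_zero_of_injective hψ (by omega) (by omega)]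
    push_cast
    ring

end AddChar

end

noncomputable def Fin.stdAddChar (N : ℕ) [NeZero N] : AddChar (Fin N) ℂ :=
  Fin.powChar (isPrimitiveRoot_exp N (NeZero.ne N)).pow_eq_one

theorem Fin.injective_stdAddChar (N : ℕ) [NeZero N] : Function.Injective (Fin.stdAddChar N) :=
  (isPrimitiveRoot_exp N (NeZero.ne N)).injective_powChar

theorem Fin.stdAddChar_apply (N : ℕ) [NeZero N] (j : Fin N) :
    Fin.stdAddChar N j = exp (2 * π * I * j / N) := by
  rw [stdAddChar, powChar_apply, ← Complex.exp_nat_mul]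
  ring_nf

theorem Complex.div_two_sin (z : ℂ) (θ : ℝ) :
    z / (2 * Real.sin θ) = I * z * exp (θ * I) / (exp (θ * I) ^ 2 - 1) := by
  have hsin : (2 * Real.sin θ : ℂ) = (exp (θ * I) ^ 2 - 1) / (I * exp (θ * I)) := by
    rw [ofReal_sin, two_sin, neg_mul, exp_neg]
    field_simp
    ring_nf
    rw [I_sq]
    ring
  rw [hsin, div_div_eq_mul_div]
  ring

-- On the diagonal both sides are `0`, the right one because `sin 0 = 0` and `x / 0 = 0`.
theorem Dmat_apply (N : ℕ) (j k : Fin N) :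
    Dmat N j k = (-1 : ℂ) ^ (j.1 + k.1) / (2 * Real.sin (π * ((j.1 : ℝ) - (k.1 : ℝ)) / N)) := by
  rw [Dmat]
  split_ifs with h <;> simp [h]

theorem Dmat_eq_circulant (n : ℕ) :
    Dmat (2 * n + 1) =
      circulant fun l => I * Fin.stdAddChar _ l ^ (n + 1) / (Fin.stdAddChar _ l - 1) := by
  ext j k
  have hN : (2 * n + 1 : ℂ) ≠ 0 := by exact_mod_cast Nat.succ_ne_zero (2 * n)
  set x := exp ((π * ((j.1 : ℝ) - (k.1 : ℝ)) / (2 * n + 1 : ℕ) : ℝ) * I)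
  have hx2 : x ^ 2 = Fin.stdAddChar _ (j - k) := by
    rw [AddChar.map_sub_eq_div, Fin.stdAddChar_apply, Fin.stdAddChar_apply, ← Complex.exp_sub,
      ← Complex.exp_nat_mul]
    congr 1
    push_cast
    field_simp
  have hxN : x ^ (2 * n + 1) = (-1) ^ (j.1 + k.1) := by
    rw [← Complex.exp_nat_mul, pow_add, ← exp_pi_mul_I, ← Complex.exp_nat_mul,
      ← Complex.exp_nat_mul, ← Complex.exp_add, Complex.exp_eq_exp_iff_exists_int]
    refine ⟨-k, ?_⟩
    push_cast
    field_simp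
    ring
  rw [Dmat_apply, div_two_sin, circulant_apply, ← hxN, ← hx2]
  ring

theorem Dmat_mulVec_stdAddChar_zpow (n : ℕ) {m : ℤ} (hm : |m| ≤ n) :
    Dmat (2 * n + 1) *ᵥ ⇑(Fin.stdAddChar _ ^ m) = (I * m) • ⇑(Fin.stdAddChar _ ^ m) := by
  obtain ⟨hm₁, hm₂⟩ := abs_le.1 hm
  obtain ⟨r, hr⟩ : ∃ r : ℕ, (r : ℤ) = n + 1 - m := ⟨_, Int.toNat_of_nonneg (by omega)⟩
  rw [Dmat_eq_circulant, circulant_mulVec_addChar]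
  congr 1
  set ψ := Fin.stdAddChar (2 * n + 1)
  have term (a : Fin (2 * n + 1)) :
      I * ψ a ^ (n + 1) / (ψ a - 1) * (ψ ^ m) (-a) = I * (ψ a ^ r / (ψ a - 1)) := by
    have h0 : ψ a ≠ 0 := (ψ.val_isUnit a).ne_zero
    rw [AddChar.zpow_apply, AddChar.map_neg_eq_inv, _root_.inv_zpow', ← zpow_natCast,
      ← zpow_natCast, div_mul_eq_mul_div, mul_assoc, ← zpow_add₀ h0, hr]
    push_cast
    ring_nf
  simp_rw [term, ← Finset.mul_sum]
  have hψ := Fin.injective_stdAddChar (2 * n + 1)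
  rw [AddChar.sum_pow_div_sub_one_of_injective hψ (by omega) (by omega)]
  have hS0 := AddChar.two_mul_sum_inv_sub_one hψ
  rw [Fintype.card_fin] at hS0
  have hrC : (r : ℂ) = n + 1 - m := by exact_mod_cast hr
  rw [hrC]
  push_cast at hS0 ⊢
  linear_combination (I / 2) * hS0

theorem Dmat_spectrum (n : ℕ) :
    ({μ : ℂ | ∃ v : Fin (2 * n + 1) → ℂ, v ≠ 0 ∧ (Dmat (2 * n + 1)).mulVec v = μ • v}
        = {μ : ℂ | ∃ m : ℤ, |m| ≤ (n : ℤ) ∧ μ = Complex.I * m}) ∧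
    (Dmat (2 * n + 1)).mulVec (fun _ => (1 : ℂ)) = 0 ∧
    (Dmat (2 * n + 1)).det = 0 := by
  have eig {m : ℤ} (hm : |m| ≤ n) : ∃ v ≠ 0, Dmat (2 * n + 1) *ᵥ v = (I * m) • v :=
    ⟨_, fun h => by simpa using congrFun h 0, Dmat_mulVec_stdAddChar_zpow n hm⟩
  have hones : Dmat (2 * n + 1) *ᵥ (fun _ => 1) = 0 := by
    simpa [Pi.one_def] using Dmat_mulVec_stdAddChar_zpow n (m := 0) (by simp)
  set S : Finset ℂ := (Icc (-n : ℤ) n).image fun m : ℤ => I * m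
  have hS : Fintype.card (Fin (2 * n + 1)) ≤ #S := by
    rw [card_image_of_injective _ fun a b h => Int.cast_injective (mul_left_cancel₀ I_ne_zero h)]
    simp
    omega
  refine ⟨Set.ext fun μ => ⟨?_, ?_⟩, hones, exists_mulVec_eq_zero_iff.1 ⟨_, ?_, hones⟩⟩
  · rintro ⟨v, hv, h⟩
    have hSD : ∀ ν ∈ S, ∃ v ≠ 0, Dmat (2 * n + 1) *ᵥ v = ν • v := by
      simp only [S, mem_image, mem_Icc]
      rintro _ ⟨m, hm, rfl⟩
      exact eig (abs_le.2 hm)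
    obtain ⟨m, hm, rfl⟩ := mem_image.1 (mem_of_mulVec_eq_smul_of_card_le hS hSD hv h)
    exact ⟨m, abs_le.2 (mem_Icc.1 hm), rfl⟩
  · rintro ⟨m, hm, rfl⟩
    exact eig hm
  · exact fun h => by simpa using congrFun h 0
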